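/- Define g_n(z) = n/2 − γ_n(z), where γ_n are the recurrence coefficients of the monic truncated Hermite polynomials. Then for all n ≥ 1, (n/2 − g_n)·(g_n + g_{n+1})·(g_n + g_{n−1}) = z²·g_n². -/

import Mathlib

/-!
With `N n = L[P n * P n]`, orthogonality and the three-term recurrence give
`N (n + 1) = γ (n + 1) * N n`. The weight `e^{-x²}` satisfies `w' = -2x w`, so integrating the
derivative of a polynomial `q` over `[-z, z]` gives `L[q'] = [q w]_{-z}^{z} + 2 L[x q]`. Applied to
the odd polynomials `P n * P (n + 1)` and `x * P n ^ 2`, this expresses the boundary values as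
`2 P_n(z) P_{n+1}(z) e^{-z²} = 2 g_{n+1} N n` and `2 z P_n(z)² e^{-z²} = 2 (g_n + g_{n+1}) N n`.
Multiplying the second identity at `n` and `n + 1` and comparing with `z²` times the square of the
first eliminates the boundary values and leaves
`γ_{n+1} (g_n + g_{n+1}) (g_{n+1} + g_{n+2}) = z² g_{n+1}²`.
-/

open Polynomial

/-- The truncated Hermite linear functional `L[p] = ∫_{-z}^{z} p(x) e^{-x²} dx`. -/
noncomputable def truncL (z : ℝ) (p : Polynomial ℝ) : ℝ :=
  ∫ x in (-z)..z, p.eval x * Real.exp (-x ^ 2)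

namespace Polynomial.Monic

variable {R : Type*} [CommRing R] {p q : R[X]} {n : ℕ}

theorem coeff_of_natDegree_eq (hp : p.Monic) (hpn : p.natDegree = n) : p.coeff n = 1 :=
  hpn ▸ hp.coeff_natDegree

theorem degree_derivative_sub_lt (hp : p.Monic) (hpn : p.natDegree = n + 1) (hq : q.Monic)
    (hqn : q.natDegree = n) : (derivative p - C ((n : R) + 1) * q).degree < (n : WithBot ℕ) := by
  rw [degree_lt_iff_coeff_zero]
  intro k hk
  rw [coeff_sub, coeff_derivative, coeff_C_mul]
  rcases hk.eq_or_lt with rfl | hk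
  · rw [hp.coeff_of_natDegree_eq hpn, hq.coeff_of_natDegree_eq hqn]
    ring
  · rw [coeff_eq_zero_of_natDegree_lt (by omega), coeff_eq_zero_of_natDegree_lt (by omega)]
    ring

theorem degree_X_mul_derivative_sub_lt (hp : p.Monic) (hpn : p.natDegree = n) :
    (X * derivative p - C (n : R) * p).degree < (n : WithBot ℕ) := by
  rw [degree_lt_iff_coeff_zero]
  rintro (_ | k) hk
  · simp [show n = 0 by omega]
  rw [coeff_sub, coeff_X_mul, coeff_derivative, coeff_C_mul]
  rcases hk.eq_or_lt with rfl | hk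
  · rw [hp.coeff_of_natDegree_eq hpn]
    push_cast
    ring
  · rw [coeff_eq_zero_of_natDegree_lt (by omega)]
    ring

end Polynomial.Monic

section OrthogonalPolynomials

variable {R : Type*} [CommRing R]

structure IsMonicOrthogonalSeq (L : R[X] →ₗ[R] R) (P : ℕ → R[X]) : Prop where
  monic : ∀ n, (P n).Monic
  natDegree_eq : ∀ n, (P n).natDegree = n
  orthogonal : ∀ m n, m ≠ n → L (P m * P n) = 0

namespace IsMonicOrthogonalSeq

variable {L : R[X] →ₗ[R] R} {P : ℕ → R[X]} {γ : ℕ → R}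

theorem map_mul_eq_zero_of_degree_lt (hP : IsMonicOrthogonalSeq L P) {m : ℕ} {q : R[X]}
    (hq : q.degree < m) : L (q * P m) = 0 := by
  suffices ∀ d ≤ m, ∀ q : R[X], q.degree < d → L (q * P m) = 0 from this m le_rfl q hq
  intro d
  induction d with
  | zero =>
    intro _ q hq
    rw [Nat.cast_zero, Nat.WithBot.lt_zero_iff, degree_eq_bot] at hq
    simp [hq]
  | succ d ih =>
    intro hdm q hq
    set r := q - C (q.coeff d) * P d
    have hr : r.degree < d := by
      rw [degree_lt_iff_coeff_zero] at hq ⊢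
      intro k hk
      rw [coeff_sub, coeff_C_mul]
      rcases hk.eq_or_lt with rfl | hk
      · rw [(hP.monic d).coeff_of_natDegree_eq (hP.natDegree_eq d), mul_one, sub_self]
      · rw [hq k hk, coeff_eq_zero_of_natDegree_lt (p := P d) (by rw [hP.natDegree_eq d]; omega),
          mul_zero, sub_zero]
    have hq_eq : q * P m = r * P m + q.coeff d • (P d * P m) := by
      rw [smul_eq_C_mul]; ring
    rw [hq_eq, map_add, map_smul, ih (by omega) r hr, hP.orthogonal d m (by omega), smul_zero,
      add_zero]

theorem map_X_mul_mul_succ (hP : IsMonicOrthogonalSeq L P)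
    (hrec : ∀ n, X * P n = P (n + 1) + C (γ n) * P (n - 1)) (n : ℕ) :
    L (X * P n * P (n + 1)) = L (P (n + 1) * P (n + 1)) := by
  rw [hrec n, add_mul, mul_assoc, ← smul_eq_C_mul, map_add, map_smul,
    hP.orthogonal (n - 1) (n + 1) (by omega), smul_zero, add_zero]

theorem map_succ_mul_succ (hP : IsMonicOrthogonalSeq L P)
    (hrec : ∀ n, X * P n = P (n + 1) + C (γ n) * P (n - 1)) (n : ℕ) :
    L (P (n + 1) * P (n + 1)) = γ (n + 1) * L (P n * P n) := by
  have hX : X * P n * P (n + 1) = P n * P (n + 2) + γ (n + 1) • (P n * P n) := by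
    rw [mul_assoc, mul_left_comm, hrec (n + 1), smul_eq_C_mul, Nat.add_sub_cancel]
    ring
  rw [← hP.map_X_mul_mul_succ hrec, hX, map_add, map_smul, hP.orthogonal n (n + 2) (by omega),
    zero_add, smul_eq_mul]

theorem map_X_mul_mul_X_mul (hP : IsMonicOrthogonalSeq L P)
    (hrec : ∀ n, X * P n = P (n + 1) + C (γ n) * P (n - 1)) (hγ0 : γ 0 = 0) (n : ℕ) :
    L (X * P n * (X * P n)) = (γ (n + 1) + γ n) * L (P n * P n) := by
  have hX : X * P n * (X * P n) = X * P n * P (n + 1) + γ n • (X * P n * P (n - 1)) := by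
    nth_rw 2 [hrec n]
    rw [smul_eq_C_mul]
    ring
  have hlow : γ n * L (X * P n * P (n - 1)) = γ n * L (P n * P n) := by
    rcases n with _ | k
    · simp [hγ0]
    · rw [Nat.add_sub_cancel, mul_right_comm, hP.map_X_mul_mul_succ hrec]
  rw [hX, map_add, map_smul, smul_eq_mul, hlow, hP.map_X_mul_mul_succ hrec,
    hP.map_succ_mul_succ hrec]
  ring

theorem map_derivative_mul_succ (hP : IsMonicOrthogonalSeq L P) (n : ℕ) :
    L (derivative (P n * P (n + 1))) = (n + 1) * L (P n * P n) := by
  have hlow : (derivative (P n)).degree < ↑(n + 1) :=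
    calc (derivative (P n)).degree ≤ (P n).degree := degree_derivative_le
      _ ≤ n := degree_le_of_natDegree_le (hP.natDegree_eq n).le
      _ < ↑(n + 1) := WithBot.coe_lt_coe.2 n.lt_succ_self
  have hsplit : derivative (P n * P (n + 1)) = derivative (P n) * P (n + 1)
      + (derivative (P (n + 1)) - C ((n : R) + 1) * P n) * P n + ((n : R) + 1) • (P n * P n) := by
    rw [derivative_mul, smul_eq_C_mul]
    ring
  rw [hsplit, map_add, map_add, map_smul, hP.map_mul_eq_zero_of_degree_lt hlow,
    hP.map_mul_eq_zero_of_degree_lt ((hP.monic _).degree_derivative_sub_lt (hP.natDegree_eq _)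
      (hP.monic n) (hP.natDegree_eq n)), zero_add, zero_add, smul_eq_mul]

theorem map_derivative_X_mul_mul_self (hP : IsMonicOrthogonalSeq L P) (n : ℕ) :
    L (derivative (X * (P n * P n))) = (2 * n + 1) * L (P n * P n) := by
  have hsplit : derivative (X * (P n * P n))
      = (2 : R) • ((X * derivative (P n) - C (n : R) * P n) * P n)
        + (2 * (n : R) + 1) • (P n * P n) := by
    rw [derivative_mul, derivative_X, derivative_mul, smul_eq_C_mul, smul_eq_C_mul]
    simp only [map_add, map_mul, map_ofNat, map_one]
    ring
  rw [hsplit, map_add, map_smul, map_smul,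
    hP.map_mul_eq_zero_of_degree_lt ((hP.monic n).degree_X_mul_derivative_sub_lt
      (hP.natDegree_eq n)), smul_zero, zero_add, smul_eq_mul]

end IsMonicOrthogonalSeq

-- At `n = 0` the term `P (n - 1)` is `P 0` (truncated subtraction); it is killed by `γ 0 = 0`.
theorem X_mul_eq_of_recurrence {P : ℕ → R[X]} {γ : ℕ → R} (hP0 : P 0 = 1) (hP1 : P 1 = X)
    (hrec : ∀ n, X * P (n + 1) = P (n + 2) + C (γ (n + 1)) * P n) (hγ0 : γ 0 = 0) (n : ℕ) :
    X * P n = P (n + 1) + C (γ n) * P (n - 1) := by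
  rcases n with _ | n
  · simp [hP0, hP1, hγ0]
  · exact hrec n

theorem eval_neg_of_recurrence {P : ℕ → R[X]} {γ : ℕ → R} (hP0 : P 0 = 1) (hP1 : P 1 = X)
    (hrec : ∀ n, X * P (n + 1) = P (n + 2) + C (γ (n + 1)) * P n) (n : ℕ) (x : R) :
    (P n).eval (-x) = (-1) ^ n * (P n).eval x := by
  induction n using Nat.strong_induction_on with
  | _ n ih =>
    match n with
    | 0 => simp [hP0]
    | 1 => simp [hP1]
    | m + 2 =>
      rw [eq_sub_of_add_eq (hrec m).symm]
      simp only [eval_sub, eval_mul, eval_X, eval_C]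
      rw [ih (m + 1) (by omega), ih m (by omega)]
      ring

end OrthogonalPolynomials

theorem intervalIntegrable_eval_mul_exp (p : ℝ[X]) (a b : ℝ) :
    IntervalIntegrable (fun x => p.eval x * Real.exp (-x ^ 2)) MeasureTheory.volume a b :=
  (by fun_prop : Continuous fun x => p.eval x * Real.exp (-x ^ 2)).intervalIntegrable a b

noncomputable def truncLₗ (z : ℝ) : ℝ[X] →ₗ[ℝ] ℝ where
  toFun := truncL z
  map_add' p q := by
    simp only [truncL, eval_add, add_mul]
    exact intervalIntegral.integral_add (intervalIntegrable_eval_mul_exp p _ _)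
      (intervalIntegrable_eval_mul_exp q _ _)
  map_smul' c p := by
    simp only [truncL, eval_smul, smul_eq_mul, mul_assoc, RingHom.id_apply]
    exact intervalIntegral.integral_const_mul c _

theorem truncL_derivative (z : ℝ) (q : ℝ[X]) :
    truncL z (derivative q)
      = (q.eval z - q.eval (-z)) * Real.exp (-z ^ 2) + 2 * truncL z (X * q) := by
  have hderiv : ∀ x, HasDerivAt (fun t => q.eval t * Real.exp (-t ^ 2))
      ((derivative q).eval x * Real.exp (-x ^ 2) - 2 * ((X * q).eval x * Real.exp (-x ^ 2))) x :=
    fun x => ((q.hasDerivAt x).mul (hasDerivAt_pow 2 x).fun_neg.exp).congr_deriv (by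
      rw [eval_mul, eval_X]
      ring)
  have hftc := intervalIntegral.integral_eq_sub_of_hasDerivAt (fun x _ => hderiv x)
    ((intervalIntegrable_eval_mul_exp _ (-z) z).sub
      ((intervalIntegrable_eval_mul_exp (X * q) (-z) z).const_mul 2))
  rw [intervalIntegral.integral_sub (intervalIntegrable_eval_mul_exp _ _ _)
    ((intervalIntegrable_eval_mul_exp _ _ _).const_mul 2), intervalIntegral.integral_const_mul,
    neg_sq] at hftc
  rw [truncL, truncL]
  linarith

theorem truncL_mul_self_pos {z : ℝ} (hz : 0 < z) {p : ℝ[X]} (hp : p ≠ 0) :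
    0 < truncL z (p * p) := by
  obtain ⟨c, hc, hroot⟩ :=
    (Set.Icc_infinite (neg_lt_self hz)).exists_notMem_finset p.roots.toFinset
  have hpc : p.eval c ≠ 0 := by simpa [hp] using hroot
  refine intervalIntegral.integral_pos (neg_lt_self hz) (by fun_prop) (fun x _ => ?_)
    ⟨c, hc, ?_⟩
  · rw [eval_mul]
    exact mul_nonneg (mul_self_nonneg _) (Real.exp_pos _).le
  · rw [eval_mul]
    exact mul_pos (mul_self_pos.2 hpc) (Real.exp_pos _)

section TruncatedHermite

variable {z : ℝ} {P : ℕ → ℝ[X]} {γ : ℕ → ℝ}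

theorem two_mul_eval_mul_eval_succ_mul_exp (hP : IsMonicOrthogonalSeq (truncLₗ z) P)
    (hrec : ∀ n, X * P n = P (n + 1) + C (γ n) * P (n - 1))
    (hpar : ∀ n x, (P n).eval (-x) = (-1) ^ n * (P n).eval x) (n : ℕ) :
    2 * ((P n).eval z * (P (n + 1)).eval z * Real.exp (-z ^ 2))
      = ((n : ℝ) + 1 - 2 * γ (n + 1)) * truncL z (P n * P n) := by
  have hder : truncL z (derivative (P n * P (n + 1))) = ((n : ℝ) + 1) * truncL z (P n * P n) :=
    hP.map_derivative_mul_succ n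
  have hX : truncL z (X * (P n * P (n + 1))) = γ (n + 1) * truncL z (P n * P n) := by
    rw [← mul_assoc]
    exact (hP.map_X_mul_mul_succ hrec n).trans (hP.map_succ_mul_succ hrec n)
  have hsign : ((-1 : ℝ) ^ n) ^ 2 = 1 := by rw [← pow_mul, pow_mul', neg_one_sq, one_pow]
  have hibp := truncL_derivative z (P n * P (n + 1))
  rw [hder, hX, eval_mul, eval_mul, hpar, hpar, pow_succ] at hibp
  linear_combination -hibp - (P n).eval z * (P (n + 1)).eval z * Real.exp (-z ^ 2) * hsign

theorem two_mul_mul_eval_sq_mul_exp (hP : IsMonicOrthogonalSeq (truncLₗ z) P)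
    (hrec : ∀ n, X * P n = P (n + 1) + C (γ n) * P (n - 1)) (hγ0 : γ 0 = 0)
    (hpar : ∀ n x, (P n).eval (-x) = (-1) ^ n * (P n).eval x) (n : ℕ) :
    2 * (z * (P n).eval z ^ 2 * Real.exp (-z ^ 2))
      = (2 * (n : ℝ) + 1 - 2 * γ (n + 1) - 2 * γ n) * truncL z (P n * P n) := by
  have hder : truncL z (derivative (X * (P n * P n)))
      = (2 * (n : ℝ) + 1) * truncL z (P n * P n) :=
    hP.map_derivative_X_mul_mul_self n
  have hX : truncL z (X * (X * (P n * P n))) = (γ (n + 1) + γ n) * truncL z (P n * P n) := by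
    rw [show X * (X * (P n * P n)) = X * P n * (X * P n) by ring]
    exact hP.map_X_mul_mul_X_mul hrec hγ0 n
  have hsign : ((-1 : ℝ) ^ n) ^ 2 = 1 := by rw [← pow_mul, pow_mul', neg_one_sq, one_pow]
  have hibp := truncL_derivative z (X * (P n * P n))
  rw [hder, hX, eval_mul, eval_mul, eval_mul, eval_mul, eval_X, eval_X, hpar] at hibp
  linear_combination -hibp - z * (P n).eval z ^ 2 * Real.exp (-z ^ 2) * hsign

end TruncatedHermite

theorem truncated_hermite_laguerre_freud_g_general (z : ℝ) (hz : 0 < z)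
    (P : ℕ → Polynomial ℝ) (γ : ℕ → ℝ)
    (hmonic : ∀ n, (P n).Monic) (hdeg : ∀ n, (P n).natDegree = n)
    (horth : ∀ m n, m ≠ n → truncL z (P m * P n) = 0)
    (hP0 : P 0 = 1) (hP1 : P 1 = X)
    (hrec : ∀ n, X * P (n + 1) = P (n + 2) + C (γ (n + 1)) * P n)
    (hγ0 : γ 0 = 0)
    (g : ℕ → ℝ) (hg : ∀ n, g n = (n : ℝ) / 2 - γ n) :
    ∀ n : ℕ, 1 ≤ n →
      ((n : ℝ) / 2 - g n) * (g n + g (n + 1)) * (g n + g (n - 1)) = z ^ 2 * g n ^ 2 := by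
  have hP : IsMonicOrthogonalSeq (truncLₗ z) P := ⟨hmonic, hdeg, horth⟩
  have hrec' := X_mul_eq_of_recurrence hP0 hP1 hrec hγ0
  have hpar := eval_neg_of_recurrence hP0 hP1 hrec
  intro n hn
  obtain ⟨m, rfl⟩ := Nat.exists_eq_add_of_le' hn
  have hA := two_mul_eval_mul_eval_succ_mul_exp hP hrec' hpar m
  have hB := two_mul_mul_eval_sq_mul_exp hP hrec' hγ0 hpar m
  have hB' := two_mul_mul_eval_sq_mul_exp hP hrec' hγ0 hpar (m + 1)
  have hN : truncL z (P (m + 1) * P (m + 1)) = γ (m + 1) * truncL z (P m * P m) :=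
    hP.map_succ_mul_succ hrec' m
  rw [hN] at hB'
  have hpos := truncL_mul_self_pos hz (hmonic m).ne_zero
  have hboundary : 2 * (z * (P m).eval z ^ 2 * Real.exp (-z ^ 2))
      * (2 * (z * (P (m + 1)).eval z ^ 2 * Real.exp (-z ^ 2)))
      = z ^ 2 * (2 * ((P m).eval z * (P (m + 1)).eval z * Real.exp (-z ^ 2))) ^ 2 := by
    ring
  rw [hA, hB, hB'] at hboundary
  have hcancel : (((m + 1 : ℕ) : ℝ) / 2 - g (m + 1)) * (g (m + 1) + g (m + 1 + 1))
      * (g (m + 1) + g (m + 1 - 1)) * truncL z (P m * P m) ^ 2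
      = z ^ 2 * g (m + 1) ^ 2 * truncL z (P m * P m) ^ 2 := by
    simp only [hg, Nat.add_sub_cancel]
    push_cast at hboundary ⊢
    linear_combination hboundary / 4
  exact mul_right_cancel₀ (pow_ne_zero 2 hpos.ne') hcancel

theorem truncated_hermite_laguerre_freud_g (z : ℝ) (hz : 0 < z)
    (P : ℕ → Polynomial ℝ) (γ h : ℕ → ℝ)
    (hmonic : ∀ n, (P n).Monic) (hdeg : ∀ n, (P n).natDegree = n)
    (horth : ∀ m n, m ≠ n → truncL z (P m * P n) = 0)
    (hP0 : P 0 = 1) (hP1 : P 1 = X)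
    (hrec : ∀ n, X * P (n + 1) = P (n + 2) + C (γ (n + 1)) * P n)
    (hh : ∀ n, h n = truncL z (P n * P n)) (hγ0 : γ 0 = 0)
    (g : ℕ → ℝ) (hg : ∀ n, g n = (n : ℝ) / 2 - γ n) :
    ∀ n : ℕ, 1 ≤ n →
      ((n : ℝ) / 2 - g n) * (g n + g (n + 1)) * (g n + g (n - 1)) = z ^ 2 * g n ^ 2 :=
  truncated_hermite_laguerre_freud_g_general z hz P γ hmonic hdeg horth hP0 hP1 hrec hγ0 g hg
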